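/- Let r = min{m,n}, s ∈ {0,1,…,r}, S = {y ∈ ℝ^{m×n} : rank(y) ≤ s}, and x̄ ∈ S. If w is a limit of proximal normals to S, i.e., w = lim_k w^k with w^k = t_k(x^k − y^k), x^k → x̄, x^k ∉ S, y^k ∈ P_S(x^k), and t_k ≥ 0, then rank(w) ≤ r − s and ker(w)^⊥ ∩ ker(x̄)^⊥ = {0}. Consequently N_S(x̄) ⊆ {v : ker(v)^⊥ ∩ ker(x̄)^⊥ = {0}, rank(v) ≤ r − s}. -/

import Mathlib

open Filter Topology Matrix Set
open scoped ENNReal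

attribute [local instance] Matrix.frobeniusNormedAddCommGroup

noncomputable section

namespace RankPaper

variable {m n : ℕ}

/-- Singular values of `x` in decreasing order (`svals x ⟨0,_⟩ = σ₁(x)` is the largest),
indexed by `Fin (min m n)`; defined as the square roots of the decreasingly sorted
eigenvalues of `xᴴ * x`. -/
noncomputable def svals (x : Matrix (Fin m) (Fin n) ℝ) : Fin (min m n) → ℝ := fun j =>
  Real.sqrt
    (((by simpa using Matrix.isHermitian_conjTranspose_mul_self x : (xᵀ * x).IsHermitian).eigenvalues ∘
        ⇑(Tuple.sort (by simpa using Matrix.isHermitian_conjTranspose_mul_self x : (xᵀ * x).IsHermitian).eigenvalues))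
      (Fin.rev (Fin.castLE (min_le_right m n) j)))

/-- The `m × n` diagonal matrix of singular values `Σ(x)`. -/
noncomputable def SigmaMat (x : Matrix (Fin m) (Fin n) ℝ) : Matrix (Fin m) (Fin n) ℝ :=
  Matrix.of fun i j =>
    if h : (i : ℕ) = (j : ℕ) ∧ (i : ℕ) < min m n then svals x ⟨(i : ℕ), h.2⟩ else 0

/-- The truncated diagonal matrix `Σ_s(x)` keeping only the `s` largest singular values. -/
noncomputable def SigmaTrunc (s : ℕ) (x : Matrix (Fin m) (Fin n) ℝ) :
    Matrix (Fin m) (Fin n) ℝ :=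
  Matrix.of fun i j =>
    if h : (i : ℕ) = (j : ℕ) ∧ (i : ℕ) < min m n ∧ (i : ℕ) < s then
      svals x ⟨(i : ℕ), h.2.1⟩ else 0

/-- The (multivalued) projection onto a set `Ω ⊆ ℝ^{m×n}` w.r.t. the Frobenius norm. -/
def projSet (Ω : Set (Matrix (Fin m) (Fin n) ℝ)) (x : Matrix (Fin m) (Fin n) ℝ) :
    Set (Matrix (Fin m) (Fin n) ℝ) :=
  {y | y ∈ Ω ∧ ∀ z ∈ Ω, ‖x - y‖ ≤ ‖x - z‖}

/-- The proximal normal cone to `Ω` at `xb`: all vectors `t • (x - xb)` with `t ≥ 0`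
and `xb` a nearest point of `Ω` to `x`. -/
def proxNormalCone (Ω : Set (Matrix (Fin m) (Fin n) ℝ)) (xb : Matrix (Fin m) (Fin n) ℝ) :
    Set (Matrix (Fin m) (Fin n) ℝ) :=
  {v | ∃ t : ℝ, 0 ≤ t ∧ ∃ x, xb ∈ projSet Ω x ∧ v = t • (x - xb)}

/-- The limiting (Mordukhovich) normal cone to `Ω` at `xb`, described via limits of
proximal-normal directions `v^k ∈ cone (x^k - P_Ω(x^k))` along sequences `x^k → xb`. -/
def normalCone (Ω : Set (Matrix (Fin m) (Fin n) ℝ)) (xb : Matrix (Fin m) (Fin n) ℝ) :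
    Set (Matrix (Fin m) (Fin n) ℝ) :=
  {v | ∃ x w : ℕ → Matrix (Fin m) (Fin n) ℝ,
      Tendsto x atTop (𝓝 xb) ∧ Tendsto w atTop (𝓝 v) ∧
      ∀ k, ∃ t : ℝ, 0 ≤ t ∧ ∃ y ∈ projSet Ω (x k), w k = t • (x k - y)}

/-- The row space of `x`, i.e. `range (xᵀ) = ker(x)ᗮ ⊆ ℝⁿ`. -/
def rowSpace (x : Matrix (Fin m) (Fin n) ℝ) : Submodule ℝ (Fin n → ℝ) :=
  LinearMap.range (Matrix.mulVecLin xᵀ)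

/-- `𝕁(x, α) = {j : σ_j(x) ≥ α}` (in particular empty for `α = ∞`). -/
def Jset (x : Matrix (Fin m) (Fin n) ℝ) (α : ℝ≥0∞) : Set (Fin (min m n)) :=
  {j | α ≤ ENNReal.ofReal (svals x j)}

/-- `α_s(x) = sup {α : |𝕁(x,α)| ≥ s}`. -/
noncomputable def alphaS (s : ℕ) (x : Matrix (Fin m) (Fin n) ℝ) : ℝ≥0∞ :=
  sSup {α : ℝ≥0∞ | s ≤ (Jset x α).ncard}


/-!
If `y` is a nearest point of `{rank ≤ s}` to `x`, then `y + c • (E * y)` and `y + c • (y * F)`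
stay in the level set for every `c`, so first-order optimality gives `(x - y)ᵀ * y = 0` and
`(x - y) * yᵀ = 0`: the residual and `y` have orthogonal column spaces and orthogonal row spaces,
whence `rank (x - y) + rank y ≤ min m n`. If `rank x > s`, then `rank y ≥ s`, since otherwise every
rank-one perturbation `y + c • single i j 1` is admissible and forces `x = y`. Hence every proximal
normal has rank at most `min m n - s`. Both properties survive the limit: rank is lower
semicontinuous, `y k → xb` because `‖x k - y k‖ ≤ ‖x k - xb‖`, and `(x k - y k) * (y k)ᵀ = 0`
becomes `w * xbᵀ = 0`, which makes the row spaces of `w` and `xb` intersect trivially.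
-/

section Frobenius

variable {ι κ : Type*} [Fintype ι] [Fintype κ]

theorem frobenius_norm_sq_eq_trace (A : Matrix ι κ ℝ) : ‖A‖ ^ 2 = (Aᵀ * A).trace := by
  rw [frobenius_norm_def, ← Real.rpow_natCast, ← Real.rpow_mul (by positivity)]
  norm_num [Matrix.trace, Matrix.mul_apply, Finset.sum_comm (γ := ι), sq]

theorem frobenius_norm_sub_smul_sq (a u : Matrix ι κ ℝ) (c : ℝ) :
    ‖a - c • u‖ ^ 2 = ‖a‖ ^ 2 - 2 * c * (aᵀ * u).trace + c ^ 2 * ‖u‖ ^ 2 := by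
  have h : (uᵀ * a).trace = (aᵀ * u).trace := by
    rw [← Matrix.trace_transpose, Matrix.transpose_mul, Matrix.transpose_transpose]
  simp only [frobenius_norm_sq_eq_trace, Matrix.transpose_sub, Matrix.transpose_smul,
    Matrix.sub_mul, Matrix.mul_sub, Matrix.smul_mul, Matrix.mul_smul, Matrix.trace_sub,
    Matrix.trace_smul, smul_eq_mul, h]
  ring

end Frobenius

theorem _root_.Matrix.rank_add_le {ι κ K : Type*} [Fintype κ] [Field K]
    (A B : Matrix ι κ K) : (A + B).rank ≤ A.rank + B.rank := by
  refine (Submodule.finrank_mono ?_).trans (Submodule.finrank_add_le_finrank_add_finrank _ _)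
  rintro - ⟨v, rfl⟩
  simpa [Matrix.add_mulVec] using Submodule.add_mem_sup
    (LinearMap.mem_range_self A.mulVecLin v) (LinearMap.mem_range_self B.mulVecLin v)

theorem _root_.Matrix.rank_smul_le {ι κ K : Type*} [Fintype κ] [Field K]
    (c : K) (A : Matrix ι κ K) : (c • A).rank ≤ A.rank := by
  refine Submodule.finrank_mono ?_
  rintro - ⟨v, rfl⟩
  exact ⟨c • v, by simp⟩

theorem _root_.Matrix.rank_single_le_one {ι κ K : Type*} [Fintype κ] [DecidableEq ι]
    [DecidableEq κ] [Field K] (i : ι) (j : κ) (c : K) : (Matrix.single i j c).rank ≤ 1 := by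
  rw [show Matrix.single i j c = c • Matrix.single i j 1 by simp,
    Matrix.single_eq_single_vecMulVec_single]
  exact (Matrix.rank_smul_le _ _).trans (Matrix.rank_vecMulVec_le _ _)

section Projection

variable {Ω : Set (Matrix (Fin m) (Fin n) ℝ)} {x y : Matrix (Fin m) (Fin n) ℝ}

theorem eq_of_mem_projSet_of_mem (hy : y ∈ projSet Ω x) (hx : x ∈ Ω) : y = x := by
  simpa [sub_eq_zero, eq_comm] using hy.2 x hx

theorem trace_transpose_mul_eq_zero_of_mem_projSet (hy : y ∈ projSet Ω x)
    {u : Matrix (Fin m) (Fin n) ℝ} (hu : ∀ c : ℝ, y + c • u ∈ Ω) :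
    ((x - y)ᵀ * u).trace = 0 := by
  have hquad : ∀ c : ℝ, 0 ≤ ‖u‖ ^ 2 * (c * c) + -2 * ((x - y)ᵀ * u).trace * c + 0 := by
    intro c
    have hle := pow_le_pow_left₀ (norm_nonneg _) (hy.2 _ (hu c)) 2
    rw [show x - (y + c • u) = (x - y) - c • u by abel, frobenius_norm_sub_smul_sq] at hle
    linarith
  have hdiscrim := discrim_le_zero hquad
  rw [discrim] at hdiscrim
  nlinarith

end Projection

section RankLevelSet

variable {s : ℕ} {x y : Matrix (Fin m) (Fin n) ℝ}

theorem transpose_mem_projSet_rank_le (hy : y ∈ projSet {z | z.rank ≤ s} x) :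
    yᵀ ∈ projSet {z | z.rank ≤ s} xᵀ := by
  refine ⟨by simpa [Matrix.rank_transpose] using hy.1, fun z hz => ?_⟩
  have := hy.2 zᵀ (by simpa [Matrix.rank_transpose] using hz)
  rwa [← Matrix.frobenius_norm_transpose, ← Matrix.frobenius_norm_transpose (x - zᵀ),
    Matrix.transpose_sub, Matrix.transpose_sub, Matrix.transpose_transpose] at this

theorem transpose_mul_eq_zero_of_mem_projSet_rank_le (hy : y ∈ projSet {z | z.rank ≤ s} x) :
    (x - y)ᵀ * y = 0 := by
  refine Matrix.ext_iff_trace_mul_right.2 fun F => ?_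
  rw [Matrix.zero_mul, Matrix.trace_zero, Matrix.mul_assoc]
  refine trace_transpose_mul_eq_zero_of_mem_projSet hy fun c => ?_
  rw [Set.mem_ofPred_eq, show y + c • (y * F) = y * (1 + c • F) by
    rw [Matrix.mul_add, Matrix.mul_one, Matrix.mul_smul]]
  exact (Matrix.rank_mul_le_left _ _).trans hy.1

theorem mul_transpose_eq_zero_of_mem_projSet_rank_le (hy : y ∈ projSet {z | z.rank ≤ s} x) :
    (x - y) * yᵀ = 0 := by
  simpa using transpose_mul_eq_zero_of_mem_projSet_rank_le (transpose_mem_projSet_rank_le hy)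

theorem le_rank_of_mem_projSet_rank_le (hx : x ∉ {z | z.rank ≤ s})
    (hy : y ∈ projSet {z | z.rank ≤ s} x) : s ≤ y.rank := by
  by_contra! hlt
  have hentry : ∀ i j, (x - y) i j = 0 := fun i j => by
    have hperturb : ∀ c : ℝ, y + c • Matrix.single i j 1 ∈ {z | z.rank ≤ s} := fun c => by
      have := Matrix.rank_single_le_one i j c
      have := Matrix.rank_add_le y (Matrix.single i j c)
      simp only [Matrix.smul_single, smul_eq_mul, mul_one, Set.mem_ofPred_eq]
      omega
    simpa [Matrix.trace_mul_single] using
      trace_transpose_mul_eq_zero_of_mem_projSet hy hperturb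
  have hxy : x = y := sub_eq_zero.1 (Matrix.ext hentry)
  exact hx (hxy ▸ hy.1)

theorem rank_sub_add_rank_le_of_mem_projSet_rank_le (hy : y ∈ projSet {z | z.rank ≤ s} x) :
    (x - y).rank + y.rank ≤ min m n := by
  have hm := Matrix.rank_add_rank_le_card_of_mul_eq_zero
    (transpose_mul_eq_zero_of_mem_projSet_rank_le hy)
  have hn := Matrix.rank_add_rank_le_card_of_mul_eq_zero
    (mul_transpose_eq_zero_of_mem_projSet_rank_le hy)
  rw [Matrix.rank_transpose, Fintype.card_fin] at hm hn
  exact le_min hm hn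

theorem rank_smul_sub_le_of_mem_projSet_rank_le (hy : y ∈ projSet {z | z.rank ≤ s} x) (t : ℝ) :
    (t • (x - y)).rank ≤ min m n - s := by
  by_cases hx : x ∈ {z | z.rank ≤ s}
  · simp [eq_of_mem_projSet_of_mem hy hx, Matrix.rank_zero]
  · have := le_rank_of_mem_projSet_rank_le hx hy
    have := rank_sub_add_rank_le_of_mem_projSet_rank_le hy
    have := Matrix.rank_smul_le t (x - y)
    omega

end RankLevelSet

section Topology

variable {ι κ : Type*} [Fintype κ]

theorem exists_linearIndependent_mulVec {K : Type*} [Field K] (A : Matrix ι κ K) :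
    ∃ v : Fin A.rank → κ → K, LinearIndependent K fun l => A *ᵥ v l := by
  let b := Module.finBasis K (LinearMap.range A.mulVecLin)
  choose v hv using fun l => (b l).2
  have hAv : (fun l => A *ᵥ v l) = (LinearMap.range A.mulVecLin).subtype ∘ b := funext hv
  exact ⟨v, hAv ▸ b.linearIndependent.map' _ (Submodule.ker_subtype _)⟩

theorem le_rank_of_linearIndependent_mulVec {K : Type*} [Field K] {r : ℕ} {A : Matrix ι κ K}
    {v : Fin r → κ → K} (hv : LinearIndependent K fun l => A *ᵥ v l) : r ≤ A.rank := by
  calc r = Module.finrank K (Submodule.span K (Set.range fun l => A *ᵥ v l)) := by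
        rw [finrank_span_eq_card hv, Fintype.card_fin]
    _ ≤ A.rank := Submodule.finrank_mono
        (Submodule.span_le.2 (Set.range_subset_iff.2 fun l => ⟨v l, rfl⟩))

theorem isOpen_setOf_lt_rank [Fintype ι] (q : ℕ) : IsOpen {A : Matrix ι κ ℝ | q < A.rank} := by
  refine isOpen_iff_mem_nhds.2 fun A hA => ?_
  obtain ⟨v, hv⟩ := exists_linearIndependent_mulVec A
  have hcont : Continuous fun A' : Matrix ι κ ℝ => fun l => A' *ᵥ v l :=
    continuous_pi fun l => continuous_id.matrix_mulVec continuous_const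
  filter_upwards [hcont.continuousAt.eventually hv.eventually] with A' hA'
  exact lt_of_lt_of_le hA (le_rank_of_linearIndependent_mulVec hA')

theorem isClosed_setOf_rank_le [Fintype ι] (q : ℕ) :
    IsClosed {A : Matrix ι κ ℝ | A.rank ≤ q} := by
  simpa only [← isOpen_compl_iff, Set.compl_ofPred, not_le] using isOpen_setOf_lt_rank q

end Topology

theorem tendsto_of_dist_le_dist {α E : Type*} [PseudoMetricSpace E] {l : Filter α} {x y : α → E}
    {a : E} (hx : Tendsto x l (𝓝 a)) (hxy : ∀ k, dist (x k) (y k) ≤ dist (x k) a) :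
    Tendsto y l (𝓝 a) := by
  rw [tendsto_iff_dist_tendsto_zero] at hx ⊢
  refine squeeze_zero (fun _ => dist_nonneg) (fun k => ?_) (by simpa using hx.const_mul 2)
  calc dist (y k) a ≤ dist (y k) (x k) + dist (x k) a := dist_triangle _ _ _
    _ ≤ 2 * dist (x k) a := by linarith [dist_comm (y k) (x k), hxy k]

theorem rowSpace_inf_eq_bot_of_mul_transpose_eq_zero {A B : Matrix (Fin m) (Fin n) ℝ}
    (h : A * Bᵀ = 0) : rowSpace A ⊓ rowSpace B = ⊥ := by
  rw [eq_bot_iff]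
  rintro - ⟨⟨a, rfl⟩, b, hb⟩
  have hBA : B * Aᵀ = 0 := by simpa using congrArg Matrix.transpose h
  have hker : b ∈ LinearMap.ker (Bᵀᵀ * Bᵀ).mulVecLin := by
    rw [LinearMap.mem_ker, Matrix.mulVecLin_apply, ← Matrix.mulVec_mulVec,
      Matrix.transpose_transpose, show Bᵀ *ᵥ b = Aᵀ *ᵥ a from hb, Matrix.mulVec_mulVec, hBA,
      Matrix.zero_mulVec]
  rw [Matrix.ker_mulVecLin_transpose_mul_self] at hker
  rw [Submodule.mem_bot, ← hb]
  exact hker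

theorem rank_le_and_rowSpace_inf_eq_bot_of_tendsto {s : ℕ} {xb w : Matrix (Fin m) (Fin n) ℝ}
    (hxb : xb.rank ≤ s) {x y : ℕ → Matrix (Fin m) (Fin n) ℝ} {t : ℕ → ℝ}
    (hy : ∀ k, y k ∈ projSet {z | z.rank ≤ s} (x k)) (hx : Tendsto x atTop (𝓝 xb))
    (hw : Tendsto (fun k => t k • (x k - y k)) atTop (𝓝 w)) :
    w.rank ≤ min m n - s ∧ rowSpace w ⊓ rowSpace xb = ⊥ := by
  refine ⟨(isClosed_setOf_rank_le _).mem_of_tendsto hw (Eventually.of_forall fun k =>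
    rank_smul_sub_le_of_mem_projSet_rank_le (hy k) (t k)), ?_⟩
  have hyb : Tendsto y atTop (𝓝 xb) :=
    tendsto_of_dist_le_dist hx fun k => by simpa only [dist_eq_norm] using (hy k).2 xb hxb
  have hlim : Tendsto (fun k => (t k • (x k - y k)) * (y k)ᵀ) atTop (𝓝 (w * xbᵀ)) :=
    ((continuous_fst.matrix_mul continuous_snd.matrix_transpose).tendsto (w, xb)).comp
      (hw.prodMk_nhds hyb)
  have hzero : ∀ k, (t k • (x k - y k)) * (y k)ᵀ = 0 := fun k => by
    rw [Matrix.smul_mul, mul_transpose_eq_zero_of_mem_projSet_rank_le (hy k), smul_zero]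
  simp only [hzero] at hlim
  exact rowSpace_inf_eq_bot_of_mul_transpose_eq_zero
    (tendsto_nhds_unique hlim tendsto_const_nhds)

theorem normalCone_subset_of_rank_level_set_general (m n s : ℕ)
    (xb : Matrix (Fin m) (Fin n) ℝ) (hxb : xb.rank ≤ s) :
    (∀ (w : Matrix (Fin m) (Fin n) ℝ) (x y : ℕ → Matrix (Fin m) (Fin n) ℝ) (t : ℕ → ℝ),
      (∀ k, 0 ≤ t k) →
      (∀ k, x k ∉ {y : Matrix (Fin m) (Fin n) ℝ | y.rank ≤ s}) →
      (∀ k, y k ∈ projSet {y : Matrix (Fin m) (Fin n) ℝ | y.rank ≤ s} (x k)) →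
      Tendsto x atTop (𝓝 xb) →
      Tendsto (fun k => t k • (x k - y k)) atTop (𝓝 w) →
      w.rank ≤ min m n - s ∧ rowSpace w ⊓ rowSpace xb = ⊥) ∧
    normalCone {y : Matrix (Fin m) (Fin n) ℝ | y.rank ≤ s} xb ⊆
      {v : Matrix (Fin m) (Fin n) ℝ |
        rowSpace v ⊓ rowSpace xb = ⊥ ∧ v.rank ≤ min m n - s} := by
  refine ⟨fun w x y t _ _ hy hx hw =>
    rank_le_and_rowSpace_inf_eq_bot_of_tendsto hxb hy hx hw, ?_⟩
  rintro v ⟨x, w, hx, hw, hproxNormal⟩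
  choose t _ y hy hw_eq using hproxNormal
  rw [funext hw_eq] at hw
  exact (rank_le_and_rowSpace_inf_eq_bot_of_tendsto hxb hy hx hw).symm

/-- limits of proximal normals to `S = {y : rank y ≤ s}` at points near
`xb ∈ S` have rank at most `r - s` and row space intersecting that of `xb` trivially;
consequently the limiting normal cone is contained in that set. -/
theorem normalCone_subset_of_rank_level_set (m n s : ℕ) (hs : s ≤ min m n)
    (xb : Matrix (Fin m) (Fin n) ℝ) (hxb : xb.rank ≤ s) :
    (∀ (w : Matrix (Fin m) (Fin n) ℝ) (x y : ℕ → Matrix (Fin m) (Fin n) ℝ) (t : ℕ → ℝ),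
      (∀ k, 0 ≤ t k) →
      (∀ k, x k ∉ {y : Matrix (Fin m) (Fin n) ℝ | y.rank ≤ s}) →
      (∀ k, y k ∈ projSet {y : Matrix (Fin m) (Fin n) ℝ | y.rank ≤ s} (x k)) →
      Tendsto x atTop (𝓝 xb) →
      Tendsto (fun k => t k • (x k - y k)) atTop (𝓝 w) →
      w.rank ≤ min m n - s ∧ rowSpace w ⊓ rowSpace xb = ⊥) ∧
    normalCone {y : Matrix (Fin m) (Fin n) ℝ | y.rank ≤ s} xb ⊆
      {v : Matrix (Fin m) (Fin n) ℝ |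
        rowSpace v ⊓ rowSpace xb = ⊥ ∧ v.rank ≤ min m n - s} :=
  normalCone_subset_of_rank_level_set_general m n s xb hxb

end RankPaper
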